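/- arXiv:2211.16384 — 2 statements merged into one kernel-verified Lean document; each statement's English description precedes it below -/
import Mathlib

section
/- Consider the 2×2 block matrix Σ(Δ) with blocks Σ_RR = Δ·a, Σ_RS = Σ_SR^T = (Δ²/2)·a·Cᵀ, Σ_SS = (Δ³/3)·C·a·Cᵀ, where a is a symmetric positive definite d_R×d_R matrix and C is a d_S×d_R matrix of full row rank d_S. Then Σ(Δ) is positive definite for every Δ > 0. -/
/-!
The corner block `Δ • a` is positive definite, and its Schur complement in `Σ(Δ)` is
`(Δ³/3 - (Δ²/2)²/Δ) • C a Cᵀ = (Δ³/12) • C a Cᵀ`, which is positive definite because the full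
row rank of `C` makes `x ↦ Cᵀ x` injective. A Hermitian block matrix whose corner and Schur
complement are both positive definite is positive semidefinite and invertible, hence positive
definite.
-/

open Matrix
open scoped ComplexOrder

theorem Matrix.vecMul_injective_of_rank_eq_card {K m n : Type*} [Field K] [Fintype m]
    [Fintype n] {M : Matrix m n K} (h : M.rank = Fintype.card m) :
    Function.Injective M.vecMul := by
  rw [vecMul_injective_iff, linearIndependent_iff_card_eq_finrank_span, Set.finrank,
    ← rank_eq_finrank_span_row, h]

theorem Matrix.PosDef.fromBlocks_of_schur {𝕜 m n : Type*} [RCLike 𝕜] [Fintype m] [Fintype n]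
    [DecidableEq m] [DecidableEq n] {A : Matrix m m 𝕜} (B : Matrix m n 𝕜) {D : Matrix n n 𝕜}
    (hA : A.PosDef) (hS : (D - Bᴴ * A⁻¹ * B).PosDef) : (fromBlocks A B Bᴴ D).PosDef := by
  let := hA.isUnit.invertible
  refine ((PosDef.fromBlocks₁₁ B D hA).mpr hS.posSemidef).posDef_iff_isUnit.mpr ?_
  rw [isUnit_iff_isUnit_det, det_fromBlocks₁₁, invOf_eq_nonsing_inv, IsUnit.mul_iff,
    ← isUnit_iff_isUnit_det, ← isUnit_iff_isUnit_det]
  exact ⟨hA.isUnit, hS.isUnit⟩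

theorem Matrix.schur_complement_smul_blocks {K m n : Type*} [Field K] [Fintype m] [Fintype n]
    [DecidableEq n] {a : Matrix n n K} (ha : IsUnit a.det) (haT : a.IsSymm) (C : Matrix m n K)
    {α : K} (hα : α ≠ 0) (β γ : K) :
    γ • (C * a * Cᵀ) - (β • (a * Cᵀ))ᵀ * (α • a)⁻¹ * (β • (a * Cᵀ)) =
      (γ - β ^ 2 / α) • (C * a * Cᵀ) := by
  let := invertibleOfNonzero hα
  rw [inv_smul a α ha, transpose_smul, transpose_mul, haT.eq, transpose_transpose]
  simp only [Matrix.smul_mul, Matrix.mul_smul, smul_smul, Matrix.mul_assoc,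
    nonsing_inv_mul_cancel_left _ _ ha, sub_smul, invOf_eq_inv]
  congr 2
  ring

/-- with `a` symmetric positive definite `d_R×d_R` and `C` a `d_S×d_R`
matrix of full row rank `d_S`, the block matrix `Σ(Δ)` with blocks
`Σ_RR = Δ·a`, `Σ_RS = Σ_SRᵀ = (Δ²/2)·a·Cᵀ`, `Σ_SS = (Δ³/3)·C·a·Cᵀ`
is positive definite for every `Δ > 0`. -/
theorem stmt9 (dR dS : ℕ) (a : Matrix (Fin dR) (Fin dR) ℝ) (ha : a.PosDef)
    (C : Matrix (Fin dS) (Fin dR) ℝ) (hC : C.rank = dS) (Δ : ℝ) (hΔ : 0 < Δ) :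
    (Matrix.fromBlocks
        (Δ • a) ((Δ ^ 2 / 2) • (a * Cᵀ))
        (((Δ ^ 2 / 2) • (a * Cᵀ))ᵀ) ((Δ ^ 3 / 3) • (C * a * Cᵀ))).PosDef := by
  have hCaC : (C * a * Cᵀ).PosDef := by
    simpa only [conjTranspose_eq_transpose_of_trivial] using
      ha.mul_mul_conjTranspose_same (vecMul_injective_of_rank_eq_card (by simpa using hC))
  have hcoeff : Δ ^ 3 / 3 - (Δ ^ 2 / 2) ^ 2 / Δ = Δ ^ 3 / 12 := by
    field_simp
    ring
  have hS : ((Δ ^ 3 / 3) • (C * a * Cᵀ) -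
      ((Δ ^ 2 / 2) • (a * Cᵀ))ᵀ * (Δ • a)⁻¹ * ((Δ ^ 2 / 2) • (a * Cᵀ))).PosDef := by
    rw [schur_complement_smul_blocks ha.det_pos.ne'.isUnit (isHermitian_iff_isSymm.mp ha.1) C
      hΔ.ne', hcoeff]
    exact hCaC.smul (by positivity)
  -- over `ℝ`, `Bᴴ` and `Bᵀ` agree definitionally
  exact PosDef.fromBlocks_of_schur _ (ha.smul hΔ) hS
end

section
/- With the block structure of the previous context (Σ_SR = (1/2) C Σ_RR, block inverse Λ), for any vectors u, v ∈ ℝ^{d_R} the quadratic form identity 4·uᵀ Λ_RR v + 2·uᵀ Λ_RS C v + 2·(C u)ᵀ Λ_SR v + (C u)ᵀ Λ_SS (C v) = 4·uᵀ Σ_RR^{-1} v holds; equivalently, [uᵀ, (½ C u)ᵀ] Σ^{-1} [v; ½ C v] = uᵀ Σ_RR^{-1} v. -/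
open Matrix

/-- with the block structure `Σ_SR = (1/2) C Σ_RR` (block inverse `Λ`),
for all vectors `u, v ∈ ℝ^{d_R}`:
`4 uᵀΛ_RR v + 2 uᵀΛ_RS (Cv) + 2 (Cu)ᵀΛ_SR v + (Cu)ᵀΛ_SS (Cv) = 4 uᵀ Σ_RR⁻¹ v`. -/
theorem stmt11 (dR dS : ℕ) (A : Matrix (Fin dR) (Fin dR) ℝ) (hA : A.PosDef)
    (C : Matrix (Fin dS) (Fin dR) ℝ) (D : Matrix (Fin dS) (Fin dS) ℝ)
    (S : Matrix (Fin dR ⊕ Fin dS) (Fin dR ⊕ Fin dS) ℝ)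
    (hS : S = Matrix.fromBlocks A (((1 / 2 : ℝ) • (C * A))ᵀ) ((1 / 2 : ℝ) • (C * A)) D)
    (hSpd : S.PosDef) (u v : Fin dR → ℝ) :
    4 * (u ⬝ᵥ ((S⁻¹).toBlocks₁₁ *ᵥ v))
      + 2 * (u ⬝ᵥ ((S⁻¹).toBlocks₁₂ *ᵥ (C *ᵥ v)))
      + 2 * ((C *ᵥ u) ⬝ᵥ ((S⁻¹).toBlocks₂₁ *ᵥ v))
      + ((C *ᵥ u) ⬝ᵥ ((S⁻¹).toBlocks₂₂ *ᵥ (C *ᵥ v)))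
      = 4 * (u ⬝ᵥ (A⁻¹ *ᵥ v)) := by
  have hSinv : S * S⁻¹ = 1 := mul_nonsing_inv S (isUnit_iff_ne_zero.mpr hSpd.det_pos.ne')
  have hSinv' : S⁻¹ * S = 1 := nonsing_inv_mul S (isUnit_iff_ne_zero.mpr hSpd.det_pos.ne')
  -- key: S⁻¹ *ᵥ (v, ½ C v) = (A⁻¹ v, 0)
  have key : S⁻¹ *ᵥ Sum.elim v ((1 / 2 : ℝ) • (C *ᵥ v)) =
      Sum.elim (A⁻¹ *ᵥ v) 0 := by
    have hSmul : S *ᵥ Sum.elim (A⁻¹ *ᵥ v) 0 = Sum.elim v ((1 / 2 : ℝ) • (C *ᵥ v)) := by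
      rw [hS, fromBlocks_mulVec, Sum.elim_comp_inl, Sum.elim_comp_inr]
      simp [mulVec_mulVec, Matrix.mul_assoc, mul_nonsing_inv A (isUnit_iff_ne_zero.mpr hA.det_pos.ne'),
        smul_mulVec]
    calc S⁻¹ *ᵥ Sum.elim v ((1 / 2 : ℝ) • (C *ᵥ v))
        = S⁻¹ *ᵥ (S *ᵥ Sum.elim (A⁻¹ *ᵥ v) 0) := by rw [hSmul]
      _ = Sum.elim (A⁻¹ *ᵥ v) 0 := by rw [mulVec_mulVec, hSinv', one_mulVec]
  have hblocks : S⁻¹ = fromBlocks (S⁻¹).toBlocks₁₁ (S⁻¹).toBlocks₁₂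
      (S⁻¹).toBlocks₂₁ (S⁻¹).toBlocks₂₂ := (fromBlocks_toBlocks _).symm
  have key2 := key
  rw [hblocks, fromBlocks_mulVec] at key2
  have h1 := congrArg (fun w => w ∘ Sum.inl) key2
  have h2 := congrArg (fun w => w ∘ Sum.inr) key2
  have h1' : (S⁻¹).toBlocks₁₁ *ᵥ v + (S⁻¹).toBlocks₁₂ *ᵥ ((1 / 2 : ℝ) • (C *ᵥ v))
      = A⁻¹ *ᵥ v := funext fun i => congrFun h1 i
  have h2' : (S⁻¹).toBlocks₂₁ *ᵥ v + (S⁻¹).toBlocks₂₂ *ᵥ ((1 / 2 : ℝ) • (C *ᵥ v))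
      = 0 := funext fun i => congrFun h2 i
  have e1 := congrArg (fun w => u ⬝ᵥ w) h1'
  have e2 := congrArg (fun w => (C *ᵥ u) ⬝ᵥ w) h2'
  simp only [dotProduct_add, mulVec_smul, dotProduct_smul, smul_eq_mul,
    dotProduct_zero] at e1 e2
  nlinarith [e1, e2]
end
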